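/- Let R be a commutative ring, Λ an alternating biderivation on R and E a derivation on R, and define {f,g} := Λ(f,g) + f·E(g) − g·E(f). Then for all f,g,h ∈ R the following identity holds: {f,{g,h}} + {g,{h,f}} + {h,{f,g}} = [Λ(f,Λ(g,h)) + Λ(g,Λ(h,f)) + Λ(h,Λ(f,g))] + (E∧Λ)(f,g,h) + f·[E,Λ](g,h) + g·[E,Λ](h,f) + h·[E,Λ](f,g). -/

import Mathlib

/-- `Λ` is an alternating biderivation on the commutative ring `R`: additive and a derivation in
each argument, and antisymmetric. -/
def IsAltBiderivation {R : Type*} [CommRing R] (Λ : R → R → R) : Prop :=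
  (∀ f g h : R, Λ (f + g) h = Λ f h + Λ g h) ∧
  (∀ f g h : R, Λ f (g + h) = Λ f g + Λ f h) ∧
  (∀ f g h : R, Λ f (g * h) = g * Λ f h + h * Λ f g) ∧
  (∀ f g h : R, Λ (f * g) h = f * Λ g h + g * Λ f h) ∧
  (∀ f g : R, Λ f g = -Λ g f)

/-- `E` is a derivation on the commutative ring `R`. -/
def IsDerivationMap {R : Type*} [CommRing R] (E : R → R) : Prop :=
  (∀ f g : R, E (f + g) = E f + E g) ∧ (∀ f g : R, E (f * g) = f * E g + g * E f)

/-- The Jacobi bracket `{f,g} := Λ(f,g) + f·E(g) - g·E(f)` determined by `Λ` and `E`. -/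
def jacobiBracket {R : Type*} [CommRing R] (Λ : R → R → R) (E : R → R) (f g : R) : R :=
  Λ f g + f * E g - g * E f

/-!
Expanding `{f,{g,h}}` with the Leibniz rules leaves, besides `Λ(f,Λ(g,h))` and the terms of
`E ∧ Λ`, terms `f·g·E²h` that cancel in the cyclic sum, and terms `g·Λ(f,Eh)`, `f·E(Λ(g,h))`
that antisymmetry of `Λ` regroups into `f·[E,Λ](g,h)` and its cyclic permutations.
-/

section

variable {R : Type*} [CommRing R] {Λ : R → R → R} {E : R → R}

theorem IsAltBiderivation.map_sub_right (hΛ : IsAltBiderivation Λ) (f g h : R) :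
    Λ f (g - h) = Λ f g - Λ f h :=
  (AddMonoidHom.mk' (Λ f) (hΛ.2.1 f)).map_sub g h

theorem IsDerivationMap.map_sub (hE : IsDerivationMap E) (f g : R) :
    E (f - g) = E f - E g :=
  (AddMonoidHom.mk' E hE.1).map_sub f g

theorem jacobiBracket_jacobiBracket (hΛ : IsAltBiderivation Λ) (hE : IsDerivationMap E)
    (f g h : R) :
    jacobiBracket Λ E f (jacobiBracket Λ E g h) =
      Λ f (Λ g h) + (E h * Λ f g - E g * Λ f h) + f * E (Λ g h) - Λ g h * E f +
        (g * Λ f (E h) - h * Λ f (E g)) + f * (g * E (E h) - h * E (E g)) -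
        (g * E h - h * E g) * E f := by
  simp only [jacobiBracket, hΛ.map_sub_right, hΛ.2.1, hΛ.2.2.1, hE.map_sub, hE.1, hE.2]
  ring

end

/-- For an alternating biderivation `Λ` and a derivation `E` on a commutative
ring `R`, the Jacobiator of the Jacobi bracket `{f,g} := Λ(f,g) + f·E(g) - g·E(f)` decomposes as
the Jacobiator of `Λ` plus `(E∧Λ)(f,g,h)` plus `f·[E,Λ](g,h) + g·[E,Λ](h,f) + h·[E,Λ](f,g)`. -/
theorem jacobiator_decomposition {R : Type*} [CommRing R] (Λ : R → R → R) (E : R → R)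
    (hΛ : IsAltBiderivation Λ) (hE : IsDerivationMap E) (f g h : R) :
    jacobiBracket Λ E f (jacobiBracket Λ E g h) +
      jacobiBracket Λ E g (jacobiBracket Λ E h f) +
      jacobiBracket Λ E h (jacobiBracket Λ E f g) =
    (Λ f (Λ g h) + Λ g (Λ h f) + Λ h (Λ f g)) +
      (E f * Λ g h + E g * Λ h f + E h * Λ f g) +
      f * (E (Λ g h) - Λ (E g) h - Λ g (E h)) +
      g * (E (Λ h f) - Λ (E h) f - Λ h (E f)) +
      h * (E (Λ f g) - Λ (E f) g - Λ f (E g)) := by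
  have hanti := hΛ.2.2.2.2
  rw [jacobiBracket_jacobiBracket hΛ hE, jacobiBracket_jacobiBracket hΛ hE,
    jacobiBracket_jacobiBracket hΛ hE]
  linear_combination g * hanti f (E h) + h * hanti g (E f) + f * hanti h (E g) -
    E h * hanti g f - E g * hanti f h - E f * hanti h g
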